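/- Off-policy Truncated Importance Sampling can produce a non-contraction: let p = 0.6 and γ = 0.94. For t ≥ 1 define β^{(1)}_t := Σ_{k=0}^{t−1} C(t−1,k) · min(2^{−(t−1)}, 2p · p^k (1−p)^{t−1−k}) and β^{(2)}_t := Σ_{k=0}^{t−1} C(t−1,k) · min(2^{−(t−1)}, 2(1−p) · (1−p)^k p^{t−1−k}), where C(t−1,k) is the binomial coefficient. Let P_π := [[p, 1−p],[p, 1−p]], B_0 := I, and B_t := (1/2)·[[β^{(1)}_t, β^{(2)}_t],[β^{(1)}_t, β^{(2)}_t]] for t ≥ 1. Then the series Z := Σ_{t=1}^∞ γ^t (B_{t−1} P_π − B_t) converges entrywise absolutely, and its maximum absolute row-sum norm satisfies ‖Z‖ > 1. -/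

import Mathlib

open scoped BigOperators

/-- The expected truncated-IS trace `β^{(1)}_{n+1}` of Counterexample 1 (as a function of
`n = t − 1`): `Σ_{k=0}^{n} C(n,k) · min(2^{−n}, 2p·p^k (1−p)^{n−k})`.  The companion trace
`β^{(2)}` is obtained by substituting `1 − p` for `p`. -/
noncomputable def tisBeta (p : ℝ) (n : ℕ) : ℝ :=
  ∑ k ∈ Finset.range (n + 1),
    (n.choose k : ℝ) * min ((2 : ℝ)⁻¹ ^ n) (2 * p * p ^ k * (1 - p) ^ (n - k))

/-- Policy matrix of Counterexample 1: `P_π = [[p, 1−p],[p, 1−p]]`. -/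
def Ppi16 (p : ℝ) : Matrix (Fin 2) (Fin 2) ℝ := !![p, 1 - p; p, 1 - p]

/-- Trace matrices of Counterexample 1: `B_0 = I` and
`B_t = (1/2)·[[β⁽¹⁾_t, β⁽²⁾_t],[β⁽¹⁾_t, β⁽²⁾_t]]` for `t ≥ 1`. -/
noncomputable def B16 (p : ℝ) : ℕ → Matrix (Fin 2) (Fin 2) ℝ
  | 0 => 1
  | n + 1 => (1 / 2 : ℝ) •
      !![tisBeta p n, tisBeta (1 - p) n; tisBeta p n, tisBeta (1 - p) n]

/-- `Z = Σ_{t=1}^∞ γ^t (B_{t−1} P_π − B_t)`, computed entrywise. -/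
noncomputable def Z16 (p γ : ℝ) : Matrix (Fin 2) (Fin 2) ℝ :=
  fun i j => ∑' t : ℕ, γ ^ (t + 1) * ((B16 p t * Ppi16 p - B16 p (t + 1)) i j)

/-- Maximum absolute row-sum (`ℓ∞`-induced) norm on 2×2 real matrices. -/
def rowNorm2 (M : Matrix (Fin 2) (Fin 2) ℝ) : ℝ :=
  max (|M 0 0| + |M 0 1|) (|M 1 0| + |M 1 1|)

/-!
For `t ≥ 2` the difference of the two row-0 entries of the `t`-th term `B_{t-1} P_π - B_t` is
`(β⁽¹⁾_{t-1} + β⁽²⁾_{t-1})(2p - 1)/2 - (β⁽¹⁾_t - β⁽²⁾_t)/2 ≥ -(2p - 1) = -1/5`, because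
`β⁽¹⁾_t - β⁽²⁾_t ≤ 2(2p - 1)`. Hence `Z 0 0 - Z 0 1` is at least its 60-th partial sum, computed
exactly in `ℚ` (about `1.126`), minus `γ^61 / (5(1 - γ)) ≈ 0.077`. Absolute convergence holds
because every entry of every term lies in `[-1/2, 1]`.
-/

open Finset

theorem min_add_le_min_add {α : Type*} [AddCommGroup α] [LinearOrder α] [IsOrderedAddMonoid α]
    {c x d : α} (hd : 0 ≤ d) : min c (x + d) ≤ min c x + d := by
  rw [← min_add_add_right]
  exact min_le_min (le_add_of_nonneg_right hd) le_rfl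

section TruncatedTrace

variable {p : ℝ}

theorem tisBeta_nonneg (hp0 : 0 ≤ p) (hp1 : p ≤ 1) (n : ℕ) : 0 ≤ tisBeta p n := by
  have : 0 ≤ 1 - p := by linarith
  unfold tisBeta
  positivity

theorem tisBeta_le_one (p : ℝ) (n : ℕ) : tisBeta p n ≤ 1 :=
  calc tisBeta p n ≤ ∑ k ∈ range (n + 1), (n.choose k : ℝ) * (2 : ℝ)⁻¹ ^ n :=
        sum_le_sum fun _ _ => mul_le_mul_of_nonneg_left (min_le_left _ _) (Nat.cast_nonneg _)
    _ = 1 := by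
        rw [← sum_mul, ← Nat.cast_sum, Nat.sum_range_choose, Nat.cast_pow, ← mul_pow]
        norm_num

/-- Reflecting `k ↦ n - k` matches the terms of `β⁽²⁾` with those of `β⁽¹⁾`; termwise they
differ by at most `2 (2p - 1) p^k (1-p)^(n-k)`, which sums to `2 (2p - 1)`. -/
theorem tisBeta_le_tisBeta_one_sub_add (hp0 : 1 / 2 ≤ p) (hp1 : p ≤ 1) (n : ℕ) :
    tisBeta p n ≤ tisBeta (1 - p) n + 2 * (2 * p - 1) := by
  have hreflect : tisBeta (1 - p) n = ∑ k ∈ range (n + 1),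
      (n.choose k : ℝ) * min ((2 : ℝ)⁻¹ ^ n) (2 * (1 - p) * p ^ k * (1 - p) ^ (n - k)) := by
    rw [tisBeta, ← sum_range_reflect]
    refine sum_congr rfl fun k hk => ?_
    have hk : k ≤ n := Nat.lt_succ_iff.mp (mem_range.mp hk)
    rw [show n + 1 - 1 - k = n - k by omega, Nat.choose_symm hk, Nat.sub_sub_self hk,
      sub_sub_cancel]
    ring_nf
  have hbinom : ∑ k ∈ range (n + 1), p ^ k * (1 - p) ^ (n - k) * (n.choose k : ℝ) = 1 := by
    rw [← add_pow, add_sub_cancel, one_pow]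
  have hd : ∀ k, 0 ≤ 2 * (2 * p - 1) * (p ^ k * (1 - p) ^ (n - k)) := by
    have : 0 ≤ 2 * p - 1 := by linarith
    intro k
    positivity
  calc tisBeta p n
      ≤ ∑ k ∈ range (n + 1),
          ((n.choose k : ℝ) * min ((2 : ℝ)⁻¹ ^ n) (2 * (1 - p) * p ^ k * (1 - p) ^ (n - k))
            + 2 * (2 * p - 1) * (p ^ k * (1 - p) ^ (n - k) * (n.choose k : ℝ))) := by
        refine sum_le_sum fun k _ => ?_
        calc (n.choose k : ℝ) * min ((2 : ℝ)⁻¹ ^ n) (2 * p * p ^ k * (1 - p) ^ (n - k))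
            = (n.choose k : ℝ) * min ((2 : ℝ)⁻¹ ^ n) (2 * (1 - p) * p ^ k * (1 - p) ^ (n - k)
                + 2 * (2 * p - 1) * (p ^ k * (1 - p) ^ (n - k))) := by ring_nf
          _ ≤ (n.choose k : ℝ) * (min ((2 : ℝ)⁻¹ ^ n) (2 * (1 - p) * p ^ k * (1 - p) ^ (n - k))
                + 2 * (2 * p - 1) * (p ^ k * (1 - p) ^ (n - k))) :=
              mul_le_mul_of_nonneg_left (min_add_le_min_add (hd k)) (Nat.cast_nonneg _)
          _ = _ := by ring
    _ = tisBeta (1 - p) n + 2 * (2 * p - 1) := by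
        rw [sum_add_distrib, ← mul_sum, hbinom, mul_one, hreflect]

end TruncatedTrace

/-- Stated over an arbitrary field so that it can also be evaluated exactly in `ℚ`. -/
def traceGap {K : Type*} [Field K] (b₁ b₂ : ℕ → K) (p : K) : ℕ → K
  | 0 => (2 * p - 1) - (b₁ 0 - b₂ 0) / 2
  | n + 1 => (b₁ n + b₂ n) * (2 * p - 1) / 2 - (b₁ (n + 1) - b₂ (n + 1)) / 2

noncomputable def traceStep (p : ℝ) (t : ℕ) : Matrix (Fin 2) (Fin 2) ℝ :=
  B16 p t * Ppi16 p - B16 p (t + 1)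

section TraceStep

variable {p : ℝ}

theorem traceStep_zero (p : ℝ) :
    traceStep p 0 = !![p - tisBeta p 0 / 2, 1 - p - tisBeta (1 - p) 0 / 2;
      p - tisBeta p 0 / 2, 1 - p - tisBeta (1 - p) 0 / 2] := by
  ext i j
  fin_cases i <;> fin_cases j <;> simp [traceStep, B16, Ppi16] <;> ring

theorem traceStep_succ (p : ℝ) (n : ℕ) :
    traceStep p (n + 1) =
      !![((tisBeta p n + tisBeta (1 - p) n) * p - tisBeta p (n + 1)) / 2,
          ((tisBeta p n + tisBeta (1 - p) n) * (1 - p) - tisBeta (1 - p) (n + 1)) / 2;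
        ((tisBeta p n + tisBeta (1 - p) n) * p - tisBeta p (n + 1)) / 2,
          ((tisBeta p n + tisBeta (1 - p) n) * (1 - p) - tisBeta (1 - p) (n + 1)) / 2] := by
  ext i j
  fin_cases i <;> fin_cases j <;> simp [traceStep, B16, Ppi16] <;> ring

theorem abs_traceStep_apply_le_one (hp0 : 0 ≤ p) (hp1 : p ≤ 1) (t : ℕ) (i j : Fin 2) :
    |traceStep p t i j| ≤ 1 := by
  have hq0 : 0 ≤ 1 - p := by linarith
  have hq1 : 1 - p ≤ 1 := by linarith
  have ha0 := tisBeta_nonneg hp0 hp1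
  have hb0 := tisBeta_nonneg hq0 hq1
  have ha1 := tisBeta_le_one p
  have hb1 := tisBeta_le_one (1 - p)
  rw [abs_le]
  rcases t with _ | n
  · have := ha0 0; have := hb0 0; have := ha1 0; have := hb1 0
    fin_cases i <;> fin_cases j <;> simp [traceStep_zero] <;> constructor <;> linarith
  · have := ha0 n; have := hb0 n; have := ha1 (n + 1); have := hb1 (n + 1)
    have := ha0 (n + 1); have := hb0 (n + 1); have := ha1 n; have := hb1 n
    fin_cases i <;> fin_cases j <;> simp [traceStep_succ] <;> constructor <;> nlinarith

theorem traceStep_apply_zero_sub_apply_one (p : ℝ) (t : ℕ) :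
    traceStep p t 0 0 - traceStep p t 0 1 = traceGap (tisBeta p) (tisBeta (1 - p)) p t := by
  rcases t with _ | n
  · simp [traceStep_zero, traceGap]; ring
  · simp [traceStep_succ, traceGap]; ring

theorem neg_le_traceGap_succ (hp0 : 1 / 2 ≤ p) (hp1 : p ≤ 1) (n : ℕ) :
    -(2 * p - 1) ≤ traceGap (tisBeta p) (tisBeta (1 - p)) p (n + 1) := by
  have hq0 : 0 ≤ 1 - p := by linarith
  have hβ : 0 ≤ (tisBeta p n + tisBeta (1 - p) n) * (2 * p - 1) :=
    mul_nonneg (add_nonneg (tisBeta_nonneg (by linarith) hp1 n)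
      (tisBeta_nonneg hq0 (by linarith) n)) (by linarith)
  have := tisBeta_le_tisBeta_one_sub_add hp0 hp1 (n + 1)
  simp only [traceGap]
  linarith

theorem summable_abs_traceStep (hp0 : 0 ≤ p) (hp1 : p ≤ 1) {γ : ℝ} (hγ0 : 0 ≤ γ) (hγ1 : γ < 1)
    (i j : Fin 2) : Summable fun t : ℕ => |γ ^ (t + 1) * traceStep p t i j| := by
  refine Summable.of_nonneg_of_le (fun _ => abs_nonneg _) (fun t => ?_)
    ((summable_geometric_of_lt_one hγ0 hγ1).mul_left γ)
  rw [abs_mul, abs_of_nonneg (by positivity), pow_succ', mul_assoc]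
  exact mul_le_mul_of_nonneg_left
    (mul_le_of_le_one_right (by positivity) (abs_traceStep_apply_le_one hp0 hp1 t i j)) hγ0

theorem summable_traceGap (hp0 : 0 ≤ p) (hp1 : p ≤ 1) {γ : ℝ} (hγ0 : 0 ≤ γ) (hγ1 : γ < 1) :
    Summable fun t : ℕ => γ ^ (t + 1) * traceGap (tisBeta p) (tisBeta (1 - p)) p t := by
  simp only [← traceStep_apply_zero_sub_apply_one, mul_sub]
  exact (summable_abs_traceStep hp0 hp1 hγ0 hγ1 0 0).of_abs.sub
    (summable_abs_traceStep hp0 hp1 hγ0 hγ1 0 1).of_abs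

theorem Z16_apply (p γ : ℝ) (i j : Fin 2) :
    Z16 p γ i j = ∑' t : ℕ, γ ^ (t + 1) * traceStep p t i j :=
  rfl

theorem Z16_zero_zero_sub_Z16_zero_one (hp0 : 0 ≤ p) (hp1 : p ≤ 1) {γ : ℝ} (hγ0 : 0 ≤ γ)
    (hγ1 : γ < 1) :
    Z16 p γ 0 0 - Z16 p γ 0 1 =
      ∑' t : ℕ, γ ^ (t + 1) * traceGap (tisBeta p) (tisBeta (1 - p)) p t := by
  rw [Z16_apply, Z16_apply, ← Summable.tsum_sub (summable_abs_traceStep hp0 hp1 hγ0 hγ1 0 0).of_abs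
    (summable_abs_traceStep hp0 hp1 hγ0 hγ1 0 1).of_abs]
  simp only [← mul_sub, traceStep_apply_zero_sub_apply_one]

end TraceStep

theorem sum_range_sub_geometric_le_tsum {f : ℕ → ℝ} (hf : Summable f) {γ c : ℝ} (hγ0 : 0 ≤ γ)
    (hγ1 : γ < 1) {N : ℕ} (hN : ∀ t, N ≤ t → -(c * γ ^ (t + 1)) ≤ f t) :
    ∑ t ∈ range N, f t - c * γ ^ (N + 1) / (1 - γ) ≤ ∑' t, f t := by
  have hgeom : HasSum (fun t => -(c * γ ^ (N + 1)) * γ ^ t) (-(c * γ ^ (N + 1)) * (1 - γ)⁻¹) :=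
    (hasSum_geometric_of_lt_one hγ0 hγ1).mul_left _
  have hterm (t : ℕ) : -(c * γ ^ (N + 1)) * γ ^ t ≤ f (t + N) :=
    calc -(c * γ ^ (N + 1)) * γ ^ t = -(c * γ ^ (t + N + 1)) := by ring
      _ ≤ f (t + N) := hN _ (Nat.le_add_left N t)
  have htail := hgeom.tsum_eq ▸
    Summable.tsum_le_tsum hterm hgeom.summable ((summable_nat_add_iff N).2 hf)
  rw [← hf.sum_add_tsum_nat_add N, div_eq_mul_inv]
  linarith

theorem sum_range_sub_le_Z16_zero_zero_sub_Z16_zero_one {p γ : ℝ} (hp0 : 1 / 2 ≤ p) (hp1 : p ≤ 1)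
    (hγ0 : 0 ≤ γ) (hγ1 : γ < 1) {N : ℕ} (hN : 1 ≤ N) :
    ∑ t ∈ range N, γ ^ (t + 1) * traceGap (tisBeta p) (tisBeta (1 - p)) p t
        - (2 * p - 1) * γ ^ (N + 1) / (1 - γ) ≤ Z16 p γ 0 0 - Z16 p γ 0 1 := by
  have hp : 0 ≤ p := by linarith
  rw [Z16_zero_zero_sub_Z16_zero_one hp hp1 hγ0 hγ1]
  refine sum_range_sub_geometric_le_tsum ?_ hγ0 hγ1 fun t ht => ?_
  · exact summable_traceGap hp hp1 hγ0 hγ1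
  · obtain ⟨n, rfl⟩ := Nat.exists_eq_add_of_le' (hN.trans ht)
    rw [← neg_mul, mul_comm]
    exact mul_le_mul_of_nonneg_left (neg_le_traceGap_succ hp0 hp1 n) (by positivity)

theorem sub_le_rowNorm2 (M : Matrix (Fin 2) (Fin 2) ℝ) : M 0 0 - M 0 1 ≤ rowNorm2 M :=
  calc M 0 0 - M 0 1 ≤ |M 0 0| + |M 0 1| := by
        linarith [le_abs_self (M 0 0), neg_abs_le (M 0 1)]
    _ ≤ rowNorm2 M := le_max_left _ _

def tisBetaRat (p : ℚ) (n : ℕ) : ℚ :=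
  ∑ k ∈ range (n + 1), (n.choose k : ℚ) * min ((2 : ℚ)⁻¹ ^ n) (2 * p * p ^ k * (1 - p) ^ (n - k))

theorem tisBeta_ratCast (p : ℚ) : tisBeta p = fun n => (tisBetaRat p n : ℝ) := by
  funext n
  simp [tisBeta, tisBetaRat]

theorem traceGap_ratCast (b₁ b₂ : ℕ → ℚ) (p : ℚ) (t : ℕ) :
    traceGap (fun n => (b₁ n : ℝ)) (fun n => (b₂ n : ℝ)) p t = traceGap b₁ b₂ p t := by
  cases t <;> simp [traceGap]

theorem one_lt_sum_range_traceGap_sub :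
    (1 : ℚ) < ∑ t ∈ range 60, (47 / 50) ^ (t + 1) *
        traceGap (tisBetaRat (3 / 5)) (tisBetaRat (2 / 5)) (3 / 5) t
      - (2 * (3 / 5) - 1) * (47 / 50) ^ (60 + 1) / (1 - 47 / 50) := by
  decide +kernel

/-- Off-policy Truncated IS can produce a non-contraction: with `p = 0.6`
and `γ = 0.94`, the series defining `Z` converges entrywise absolutely and
`‖Z‖ > 1` in the maximum absolute row-sum norm. -/
theorem stmt16 :
    (∀ i j : Fin 2,
      Summable fun t : ℕ =>
        |(0.94 : ℝ) ^ (t + 1) *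
          ((B16 0.6 t * Ppi16 0.6 - B16 0.6 (t + 1)) i j)|) ∧
    1 < rowNorm2 (Z16 0.6 0.94) := by
  refine ⟨summable_abs_traceStep (by norm_num) (by norm_num) (by norm_num) (by norm_num), ?_⟩
  refine lt_of_lt_of_le ?_ ((sum_range_sub_le_Z16_zero_zero_sub_Z16_zero_one (N := 60)
    (by norm_num) (by norm_num) (by norm_num) (by norm_num) (by norm_num)).trans
    (sub_le_rowNorm2 _))
  have hp : (0.6 : ℝ) = ((3 / 5 : ℚ) : ℝ) := by norm_num
  have hq : (1 : ℝ) - ((3 / 5 : ℚ) : ℝ) = ((2 / 5 : ℚ) : ℝ) := by norm_num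
  have hγ : (0.94 : ℝ) = ((47 / 50 : ℚ) : ℝ) := by norm_num
  rw [hp, hq, hγ, tisBeta_ratCast, tisBeta_ratCast]
  simp only [traceGap_ratCast]
  exact_mod_cast one_lt_sum_range_traceGap_sub
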